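/- arXiv:1712.08931 — 2 statements merged into one kernel-verified Lean document; each statement's English description precedes it below -/
import Mathlib

section
/- Let X be a Banach space and let (T_n) ⊂ X × X* be a sequence of maximal monotone operators each of which has convex graph. If T := liminf T_n is maximal monotone, then the sequence of functions (φ_{T_n} + δ_{T_n}) epi-converges to φ_T + δ_T, where φ_S denotes the Fitzpatrick function of S and δ_S the indicator function of S; moreover φ_T + δ_T is a representative function of T. -/
open Filter Topology
noncomputable section
variable {X : Type*} [NormedAddCommGroup X] [NormedSpace ℝ X]

def pairing (p : X × StrongDual ℝ X) : ℝ := p.2 p.1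

def ConvexERealOn {E : Type*} [AddCommGroup E] [Module ℝ E] (f : E → EReal) : Prop :=
  ∀ x y : E, ∀ a b : ℝ, 0 ≤ a → 0 ≤ b → a + b = 1 →
    f (a • x + b • y) ≤ (a : EReal) * f x + (b : EReal) * f y

def IsGamma {E : Type*} [AddCommGroup E] [Module ℝ E] [TopologicalSpace E] (f : E → EReal) : Prop :=
  LowerSemicontinuous f ∧ ConvexERealOn f ∧ ∀ x, f x ≠ ⊥

def EpiConverges {E : Type*} [TopologicalSpace E] (fs : ℕ → E → EReal) (f : E → EReal) : Prop :=
  ∀ z : E,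
    (∃ zs : ℕ → E, Tendsto zs atTop (nhds z) ∧
      Tendsto (fun n => fs n (zs n)) atTop (nhds (f z))) ∧
    (∀ zs : ℕ → E, Tendsto zs atTop (nhds z) →
      f z ≤ Filter.liminf (fun n => fs n (zs n)) atTop)

def conjFn (f : X × StrongDual ℝ X → EReal) (q : StrongDual ℝ X × X) : EReal :=
  ⨆ p : X × StrongDual ℝ X, (((q.1 p.1 + p.2 q.2 : ℝ) : EReal) - f p)

def Lset (f : X × StrongDual ℝ X → EReal) : Set (X × StrongDual ℝ X) :=
  {p | f p = (pairing p : EReal)}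

def MonotoneSet (T : Set (X × StrongDual ℝ X)) : Prop :=
  ∀ p ∈ T, ∀ q ∈ T, 0 ≤ (q.2 - p.2) (q.1 - p.1)

def MaximalMonotone (T : Set (X × StrongDual ℝ X)) : Prop :=
  MonotoneSet T ∧ ∀ S : Set (X × StrongDual ℝ X), MonotoneSet S → T ⊆ S → S = T

def OpLiminf (Ts : ℕ → Set (X × StrongDual ℝ X)) : Set (X × StrongDual ℝ X) :=
  {p | ∃ zs : ℕ → X × StrongDual ℝ X, (∀ n, zs n ∈ Ts n) ∧ Tendsto zs atTop (nhds p)}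

def fitz (T : Set (X × StrongDual ℝ X)) (p : X × StrongDual ℝ X) : EReal :=
  ⨆ q ∈ T, (((p.2 - q.2) (q.1 - p.1) + p.2 p.1 : ℝ) : EReal)

open Classical in
def indic (T : Set (X × StrongDual ℝ X)) (p : X × StrongDual ℝ X) : EReal :=
  if p ∈ T then 0 else ⊤

def IsRepFunOf (g : X × StrongDual ℝ X → EReal) (T : Set (X × StrongDual ℝ X)) : Prop :=
  IsGamma g ∧ (∀ p, (pairing p : EReal) ≤ g p) ∧ ∀ p, (g p = (pairing p : EReal) ↔ p ∈ T)

def IsReflexive (X : Type*) [NormedAddCommGroup X] [NormedSpace ℝ X] : Prop :=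
  Function.Surjective (NormedSpace.inclusionInDoubleDual ℝ X)

def WeakTendstoProd (zs : ℕ → X × StrongDual ℝ X) (z : X × StrongDual ℝ X) : Prop :=
  (∀ g : StrongDual ℝ X, Tendsto (fun n => g (zs n).1) atTop (nhds (g z.1))) ∧
  (∀ G : StrongDual ℝ (StrongDual ℝ X),
    Tendsto (fun n => G (zs n).2) atTop (nhds (G z.2)))

def MoscoConverges (fs : ℕ → X × StrongDual ℝ X → EReal)
    (f : X × StrongDual ℝ X → EReal) : Prop :=
  ∀ z : X × StrongDual ℝ X,
    (∃ zs : ℕ → X × StrongDual ℝ X, Tendsto zs atTop (nhds z) ∧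
      Tendsto (fun n => fs n (zs n)) atTop (nhds (f z))) ∧
    (∀ zs : ℕ → X × StrongDual ℝ X, WeakTendstoProd zs z →
      f z ≤ Filter.liminf (fun n => fs n (zs n)) atTop)

def Tset (h : X × StrongDual ℝ X → EReal) : Set (X × StrongDual ℝ X) :=
  {p | ((2 * pairing p : ℝ) : EReal) = h p + conjFn h (p.2, p.1)}

/-!
On a monotone set `T` the Fitzpatrick function agrees with the duality product, so
`φ_T + δ_T = ⟨·,·⟩ + δ_T`. Epi-convergence then comes from continuity of the product together
with the observation that a limit of points lying frequently in `T_n` is monotonically related to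
every point of `T = liminf T_n`, hence lies in `T` by maximality. For representativity, `T` is
closed by maximality and convex as a liminf of convex sets, and on a monotone set the product is
convex because `⟨a p + b q⟩ = a ⟨p⟩ + b ⟨q⟩ - a b ⟨q - p⟩` when `a + b = 1`.
-/

def pairingOn (T : Set (X × StrongDual ℝ X)) (p : X × StrongDual ℝ X) : EReal :=
  (pairing p : EReal) + indic T p

theorem continuous_pairing : Continuous (pairing (X := X)) :=
  isBoundedBilinearMap_apply.continuous.comp continuous_swap

theorem Filter.Tendsto.pairing_ereal {α : Type*} {l : Filter α} {zs : α → X × StrongDual ℝ X}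
    {z : X × StrongDual ℝ X} (hz : Tendsto zs l (𝓝 z)) :
    Tendsto (fun n => (pairing (zs n) : EReal)) l (𝓝 (pairing z)) :=
  EReal.tendsto_coe.mpr ((continuous_pairing.tendsto z).comp hz)

theorem continuous_sub_apply_sub :
    Continuous fun r : (X × StrongDual ℝ X) × (X × StrongDual ℝ X) =>
      (r.1.2 - r.2.2) (r.1.1 - r.2.1) :=
  isBoundedBilinearMap_apply.continuous.comp
    ((continuous_fst.snd.sub continuous_snd.snd).prodMk
      (continuous_fst.fst.sub continuous_snd.fst))

theorem sub_apply_sub_comm (f g : StrongDual ℝ X) (x y : X) :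
    (f - g) (x - y) = (g - f) (y - x) := by
  simp only [sub_apply, map_sub]
  ring

theorem pairing_smul_add_smul (p q : X × StrongDual ℝ X) {a b : ℝ} (hab : a + b = 1) :
    pairing (a • p + b • q) =
      a * pairing p + b * pairing q - a * b * (q.2 - p.2) (q.1 - p.1) := by
  obtain rfl : b = 1 - a := by linarith
  simp only [pairing, Prod.fst_add, Prod.snd_add, Prod.smul_fst, Prod.smul_snd, add_apply,
    smul_apply, sub_apply, map_add, map_sub, map_smul, smul_eq_mul]
  ring

section Monotone

variable {T : Set (X × StrongDual ℝ X)}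

theorem MaximalMonotone.mem_of_forall (hT : MaximalMonotone T) {p : X × StrongDual ℝ X}
    (h : ∀ q ∈ T, 0 ≤ (q.2 - p.2) (q.1 - p.1)) : p ∈ T := by
  have hmono : MonotoneSet (insert p T) := by
    rintro a (rfl | ha) b (rfl | hb)
    · simp
    · exact h b hb
    · rw [sub_apply_sub_comm]
      exact h a ha
    · exact hT.1 a ha b hb
  rw [← hT.2 _ hmono (Set.subset_insert _ _)]
  exact Set.mem_insert _ _

theorem MaximalMonotone.nonempty (hT : MaximalMonotone T) : T.Nonempty := by
  have hmono : MonotoneSet ({0} : Set (X × StrongDual ℝ X)) := by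
    rintro a rfl b rfl
    simp
  by_contra hempty
  rw [Set.not_nonempty_iff_eq_empty] at hempty
  subst hempty
  exact Set.singleton_ne_empty _ (hT.2 _ hmono (Set.empty_subset _))

theorem MaximalMonotone.isClosed (hT : MaximalMonotone T) : IsClosed T := by
  refine isClosed_of_closure_subset fun p hp => hT.mem_of_forall fun q hq => ?_
  have hclosed : IsClosed {p : X × StrongDual ℝ X | 0 ≤ (q.2 - p.2) (q.1 - p.1)} :=
    isClosed_le continuous_const
      (continuous_sub_apply_sub.comp (continuous_const.prodMk continuous_id))
  exact hclosed.closure_subset_iff.mpr (fun p' hp' => hT.1 p' hp' q hq) hp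

end Monotone

section PairingOn

variable {T : Set (X × StrongDual ℝ X)} {p : X × StrongDual ℝ X}

@[simp]
theorem pairingOn_of_mem (hp : p ∈ T) : pairingOn T p = pairing p := by
  simp [pairingOn, indic, hp]

@[simp]
theorem pairingOn_of_notMem (hp : p ∉ T) : pairingOn T p = ⊤ := by
  simp [pairingOn, indic, hp]

theorem pairing_le_pairingOn (T : Set (X × StrongDual ℝ X)) (p : X × StrongDual ℝ X) :
    (pairing p : EReal) ≤ pairingOn T p := by
  by_cases hp : p ∈ T <;> simp [hp]

theorem pairingOn_ne_bot (T : Set (X × StrongDual ℝ X)) (p : X × StrongDual ℝ X) :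
    pairingOn T p ≠ ⊥ :=
  ((EReal.bot_lt_coe _).trans_le (pairing_le_pairingOn T p)).ne'

theorem pairingOn_eq_pairing_iff : pairingOn T p = pairing p ↔ p ∈ T := by
  by_cases hp : p ∈ T <;> simp [hp]

theorem le_fitz {q : X × StrongDual ℝ X} (hq : q ∈ T) :
    (((p.2 - q.2) (q.1 - p.1) + p.2 p.1 : ℝ) : EReal) ≤ fitz T p :=
  le_iSup₂ (f := fun q (_ : q ∈ T) => (((p.2 - q.2) (q.1 - p.1) + p.2 p.1 : ℝ) : EReal)) q hq

theorem fitz_eq_pairing (hT : MonotoneSet T) (hp : p ∈ T) : fitz T p = pairing p := by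
  refine le_antisymm (iSup₂_le fun q hq => EReal.coe_le_coe_iff.mpr ?_) ?_
  · have hgap : (p.2 - q.2) (q.1 - p.1) = -(q.2 - p.2) (q.1 - p.1) := by
      rw [← neg_sub q.2, neg_apply]
    linarith [hT p hp q hq, show pairing p = p.2 p.1 from rfl]
  · simpa [pairing] using le_fitz (p := p) hp

theorem fitz_ne_bot (hne : T.Nonempty) (p : X × StrongDual ℝ X) : fitz T p ≠ ⊥ :=
  ne_bot_of_le_ne_bot (EReal.coe_ne_bot _) (le_fitz (p := p) hne.some_mem)

theorem fitz_add_indic (hT : MonotoneSet T) (hne : T.Nonempty) (p : X × StrongDual ℝ X) :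
    fitz T p + indic T p = pairingOn T p := by
  by_cases hp : p ∈ T
  · simp [pairingOn, fitz_eq_pairing hT hp]
  · simp [indic, hp, EReal.add_top_of_ne_bot (fitz_ne_bot hne p)]

theorem lowerSemicontinuous_pairingOn (hT : IsClosed T) : LowerSemicontinuous (pairingOn T) := by
  intro p y hy
  by_cases hp : p ∈ T
  · rw [pairingOn_of_mem hp] at hy
    filter_upwards [(continuous_coe_real_ereal.comp continuous_pairing).lowerSemicontinuous p y hy]
      with x hx
    exact hx.trans_le (pairing_le_pairingOn T x)
  · filter_upwards [hT.isOpen_compl.mem_nhds hp] with x hx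
    rwa [pairingOn_of_notMem hx, ← pairingOn_of_notMem hp]

theorem convexERealOn_pairingOn (hmono : MonotoneSet T) (hconv : Convex ℝ T) :
    ConvexERealOn (pairingOn T) := by
  intro p q a b ha hb hab
  rcases ha.eq_or_lt with rfl | ha'
  · obtain rfl : b = 1 := by linarith
    simp
  rcases hb.eq_or_lt with rfl | hb'
  · obtain rfl : a = 1 := by linarith
    simp
  by_cases hp : p ∈ T <;> by_cases hq : q ∈ T
  · rw [pairingOn_of_mem (hconv hp hq ha hb hab), pairingOn_of_mem hp, pairingOn_of_mem hq,
      ← EReal.coe_mul, ← EReal.coe_mul, ← EReal.coe_add, EReal.coe_le_coe_iff,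
      pairing_smul_add_smul p q hab]
    linarith [mul_nonneg (mul_nonneg ha hb) (hmono p hp q hq)]
  all_goals
    simp [hp, hq, EReal.coe_mul_top_of_pos ha', EReal.coe_mul_top_of_pos hb', ← EReal.coe_mul]

theorem isRepFunOf_pairingOn (hmono : MonotoneSet T) (hconv : Convex ℝ T)
    (hclosed : IsClosed T) : IsRepFunOf (pairingOn T) T :=
  ⟨⟨lowerSemicontinuous_pairingOn hclosed, convexERealOn_pairingOn hmono hconv,
      pairingOn_ne_bot T⟩,
    pairing_le_pairingOn T, fun _ => pairingOn_eq_pairing_iff⟩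

end PairingOn

section OpLiminf

variable {Ts : ℕ → Set (X × StrongDual ℝ X)}

theorem convex_opLiminf (hconv : ∀ n, Convex ℝ (Ts n)) : Convex ℝ (OpLiminf Ts) := by
  rintro p ⟨ps, hps, hpt⟩ q ⟨qs, hqs, hqt⟩ a b ha hb hab
  exact ⟨fun n => a • ps n + b • qs n, fun n => hconv n (hps n) (hqs n) ha hb hab,
    (hpt.const_smul a).add (hqt.const_smul b)⟩

theorem eventually_notMem_of_notMem_opLiminf (hmono : ∀ n, MonotoneSet (Ts n))
    (hT : MaximalMonotone (OpLiminf Ts)) {zs : ℕ → X × StrongDual ℝ X} {z : X × StrongDual ℝ X}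
    (hz : Tendsto zs atTop (𝓝 z)) (hzT : z ∉ OpLiminf Ts) : ∀ᶠ n in atTop, zs n ∉ Ts n := by
  refine not_frequently.mp fun hfreq => hzT (hT.mem_of_forall ?_)
  rintro q ⟨qs, hqs, hqt⟩
  exact ge_of_tendsto_of_frequently
    ((continuous_sub_apply_sub.tendsto _).comp (hqt.prodMk_nhds hz))
    (hfreq.mono fun n hn => hmono n (zs n) hn (qs n) (hqs n))

theorem pairingOn_opLiminf_le_liminf (hmono : ∀ n, MonotoneSet (Ts n))
    (hT : MaximalMonotone (OpLiminf Ts)) {zs : ℕ → X × StrongDual ℝ X} {z : X × StrongDual ℝ X}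
    (hz : Tendsto zs atTop (𝓝 z)) :
    pairingOn (OpLiminf Ts) z ≤ liminf (fun n => pairingOn (Ts n) (zs n)) atTop := by
  by_cases hzT : z ∈ OpLiminf Ts
  · rw [pairingOn_of_mem hzT, ← hz.pairing_ereal.liminf_eq]
    exact liminf_le_liminf (Eventually.of_forall fun n => pairing_le_pairingOn _ _)
  · rw [pairingOn_of_notMem hzT, liminf_congr ((eventually_notMem_of_notMem_opLiminf hmono hT hz
      hzT).mono fun n hn => pairingOn_of_notMem hn), liminf_const]

theorem exists_tendsto_pairingOn (hmono : ∀ n, MonotoneSet (Ts n))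
    (hT : MaximalMonotone (OpLiminf Ts)) (z : X × StrongDual ℝ X) :
    ∃ zs : ℕ → X × StrongDual ℝ X, Tendsto zs atTop (𝓝 z) ∧
      Tendsto (fun n => pairingOn (Ts n) (zs n)) atTop (𝓝 (pairingOn (OpLiminf Ts) z)) := by
  by_cases hzT : z ∈ OpLiminf Ts
  · obtain ⟨zs, hzs, hzt⟩ := id hzT
    refine ⟨zs, hzt, ?_⟩
    simp only [pairingOn_of_mem (hzs _), pairingOn_of_mem hzT]
    exact hzt.pairing_ereal
  · refine ⟨fun _ => z, tendsto_const_nhds, ?_⟩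
    rw [pairingOn_of_notMem hzT]
    exact tendsto_const_nhds.congr' ((eventually_notMem_of_notMem_opLiminf hmono hT
      tendsto_const_nhds hzT).mono fun n hn => (pairingOn_of_notMem hn).symm)

theorem epiConverges_pairingOn (hmono : ∀ n, MonotoneSet (Ts n))
    (hT : MaximalMonotone (OpLiminf Ts)) :
    EpiConverges (fun n => pairingOn (Ts n)) (pairingOn (OpLiminf Ts)) := fun z =>
  ⟨exists_tendsto_pairingOn hmono hT z, fun _ hz => pairingOn_opLiminf_le_liminf hmono hT hz⟩

end OpLiminf

theorem stmt4_general
    (Ts : ℕ → Set (X × StrongDual ℝ X))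
    (hmax : ∀ n, MaximalMonotone (Ts n))
    (hconv : ∀ n, Convex ℝ (Ts n))
    (hTmax : MaximalMonotone (OpLiminf Ts)) :
    EpiConverges (fun n p => fitz (Ts n) p + indic (Ts n) p)
      (fun p => fitz (OpLiminf Ts) p + indic (OpLiminf Ts) p) ∧
    IsRepFunOf (fun p => fitz (OpLiminf Ts) p + indic (OpLiminf Ts) p) (OpLiminf Ts) := by
  have hmono n : MonotoneSet (Ts n) := (hmax n).1
  simp only [fitz_add_indic (hmono _) (hmax _).nonempty, fitz_add_indic hTmax.1 hTmax.nonempty]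
  exact ⟨epiConverges_pairingOn hmono hTmax,
    isRepFunOf_pairingOn hTmax.1 (convex_opLiminf hconv) hTmax.isClosed⟩

/-- For maximal monotone operators with convex graph whose liminf `T` is
maximal monotone, `(φ_{T_n} + δ_{T_n})` epi-converges to `φ_T + δ_T`, a representative
function of `T`. -/
theorem stmt4 [CompleteSpace X]
    (Ts : ℕ → Set (X × StrongDual ℝ X))
    (hmax : ∀ n, MaximalMonotone (Ts n))
    (hconv : ∀ n, Convex ℝ (Ts n))
    (hTmax : MaximalMonotone (OpLiminf Ts)) :
    EpiConverges (fun n p => fitz (Ts n) p + indic (Ts n) p)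
      (fun p => fitz (OpLiminf Ts) p + indic (OpLiminf Ts) p) ∧
    IsRepFunOf (fun p => fitz (OpLiminf Ts) p + indic (OpLiminf Ts) p) (OpLiminf Ts) :=
  stmt4_general Ts hmax hconv hTmax
end
end

section
/- Let X be a Banach space, let (T_n) ⊂ X × X* be a sequence of monotone operators, and suppose T := liminf T_n is maximal monotone. If (x, x*) ∉ T and (x_n, x_n*) → (x, x*) strongly in X × X*, then (x_n, x_n*) ∉ T_n for all sufficiently large n. -/
/-! If `zs n ∈ Ts n` for infinitely many `n`, the monotonicity inequalities between `zs n` and a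
sequence realising a point `q` of `liminf Ts` pass to the limit, so `p` is monotonically related
to every point of `liminf Ts`. Maximality then forces `p ∈ liminf Ts`. -/

open Filter Topology
noncomputable section
variable {X : Type*} [NormedAddCommGroup X] [NormedSpace ℝ X]

theorem apply_sub_apply_sub_comm (p q : X × StrongDual ℝ X) :
    (q.2 - p.2) (q.1 - p.1) = (p.2 - q.2) (p.1 - q.1) := by
  rw [← neg_sub p.2, ← neg_sub p.1, neg_apply, map_neg, neg_neg]

theorem Filter.Tendsto.apply_sub_apply_sub {α : Type*} {l : Filter α}
    {zs qs : α → X × StrongDual ℝ X} {p q : X × StrongDual ℝ X}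
    (hzs : Tendsto zs l (𝓝 p)) (hqs : Tendsto qs l (𝓝 q)) :
    Tendsto (fun a => ((qs a).2 - (zs a).2) ((qs a).1 - (zs a).1)) l
      (𝓝 ((q.2 - p.2) (q.1 - p.1))) := by
  have hcont : Continuous fun r : StrongDual ℝ X × X => r.1 r.2 :=
    isBoundedBilinearMap_apply.continuous
  exact (hcont.tendsto _).comp
    ((hqs.snd_nhds.sub hzs.snd_nhds).prodMk_nhds (hqs.fst_nhds.sub hzs.fst_nhds))

theorem MaximalMonotone.mem_of_forall_nonneg {T : Set (X × StrongDual ℝ X)}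
    (hT : MaximalMonotone T) {p : X × StrongDual ℝ X}
    (hp : ∀ q ∈ T, 0 ≤ (q.2 - p.2) (q.1 - p.1)) : p ∈ T := by
  have hmono : MonotoneSet (insert p T) := by
    rintro a (rfl | ha) b (rfl | hb)
    · simp
    · exact hp b hb
    · rw [apply_sub_apply_sub_comm]
      exact hp a ha
    · exact hT.1 a ha b hb
  exact hT.2 _ hmono (Set.subset_insert p T) ▸ Set.mem_insert p T

theorem nonneg_of_mem_opLiminf_of_frequently_mem {Ts : ℕ → Set (X × StrongDual ℝ X)}
    (hmono : ∀ n, MonotoneSet (Ts n)) {p q : X × StrongDual ℝ X} (hq : q ∈ OpLiminf Ts)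
    {zs : ℕ → X × StrongDual ℝ X} (hzs : Tendsto zs atTop (𝓝 p))
    (hfreq : ∃ᶠ n in atTop, zs n ∈ Ts n) : 0 ≤ (q.2 - p.2) (q.1 - p.1) := by
  obtain ⟨qs, hqs_mem, hqs⟩ := hq
  have hfreq_nonneg : ∃ᶠ n in atTop, ((qs n).2 - (zs n).2) ((qs n).1 - (zs n).1) ∈ Set.Ici 0 :=
    hfreq.mono fun n hn => hmono n _ hn _ (hqs_mem n)
  exact isClosed_Ici.mem_of_frequently_of_tendsto hfreq_nonneg (hzs.apply_sub_apply_sub hqs)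

theorem stmt10_general
    (Ts : ℕ → Set (X × StrongDual ℝ X))
    (hmono : ∀ n, MonotoneSet (Ts n))
    (hTmax : MaximalMonotone (OpLiminf Ts))
    (p : X × StrongDual ℝ X) (hp : p ∉ OpLiminf Ts)
    (zs : ℕ → X × StrongDual ℝ X) (hzs : Tendsto zs atTop (nhds p)) :
    ∀ᶠ n in atTop, zs n ∉ Ts n := by
  refine not_frequently.mp fun hfreq => hp (hTmax.mem_of_forall_nonneg fun q hq => ?_)
  exact nonneg_of_mem_opLiminf_of_frequently_mem hmono hq hzs hfreq

/-- If `T = liminf T_n` is maximal monotone, `(x,x*) ∉ T` and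
`(x_n,x_n*) → (x,x*)`, then `(x_n,x_n*) ∉ T_n` for all large `n`. -/
theorem stmt10 [CompleteSpace X]
    (Ts : ℕ → Set (X × StrongDual ℝ X))
    (hmono : ∀ n, MonotoneSet (Ts n))
    (hTmax : MaximalMonotone (OpLiminf Ts))
    (p : X × StrongDual ℝ X) (hp : p ∉ OpLiminf Ts)
    (zs : ℕ → X × StrongDual ℝ X) (hzs : Tendsto zs atTop (nhds p)) :
    ∀ᶠ n in atTop, zs n ∉ Ts n :=
  stmt10_general Ts hmono hTmax p hp zs hzs
end
end
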